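/- arXiv:1803.03017 — 2 statements merged into one kernel-verified Lean document; each statement's English description precedes it below -/
import Mathlib

section
/- Let (W,S) be a countably generated Coxeter system and let {w_i}_{i∈I} be an ascending chain in W̄ under the weak order. Then the join ⋁_i w_i exists in W̄ and its inversion set satisfies Φ_{⋁_i w_i} = ⋃_{i∈I} Φ_{w_i}. -/
namespace CoxInf

variable {B : Type*} {W : Type*} [Group W] {M : CoxeterMatrix B}

/-- The inversion set `Φ_w` of `w⁻¹`, encoded via the canonical bijection between the
positive roots and the reflections: it corresponds to the set of left inversions of `w`. -/
def invSet (cs : CoxeterSystem M W) (w : W) : Set W :=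
  {t | cs.IsLeftInversion w t}

/-- The length-`n` prefix of an infinite word in the generators. -/
def prefixWord (ω : ℕ → B) (n : ℕ) : List B := List.ofFn fun i : Fin n => ω i

/-- `ω` is an infinite reduced expression: every finite prefix is reduced. -/
def IsInfRedExpr (cs : CoxeterSystem M W) (ω : ℕ → B) : Prop :=
  ∀ n, cs.IsReduced (prefixWord ω n)

/-- The elements of `W̄ = W ⊎ W_l`, represented as finite elements together with
infinite reduced expressions (an infinite reduced word is an equivalence class of
infinite reduced expressions having the same inversion set). -/
def barInv (cs : CoxeterSystem M W) : W ⊕ {ω : ℕ → B // IsInfRedExpr cs ω} → Set W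
  | .inl w => invSet cs w
  | .inr ω => ⋃ n, invSet cs (cs.wordProd (prefixWord ω.1 n))

end CoxInf

/-! Tits' cocycle gives the strong exchange condition: the parity of the number of occurrences of a
reflection in the left inversion sequence of a word depends only on the element the word
represents. Hence `Φ_w` is finite of size `ℓ(w)` and `Φ_{ab} = Φ_a ∆ a Φ_b a⁻¹`, so `Φ_a ⊆ Φ_x`
forces `ℓ(a⁻¹x) = ℓ(x) - ℓ(a)`: every reduced word for `a` extends to one for `x`.

Every element of `W̄` is a directed union of finite inversion sets, so the union `U` of the chain
has the same property. If `U` is finite it is itself an inversion set. Otherwise, `W` being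
countable, we enumerate `U` and build a weakly increasing sequence `x_k` exhausting `U`; extending
reduced words step by step gives an infinite reduced word whose inversion set is `U`. -/

namespace CoxeterSystem

open List

variable {B W : Type*} [Group W] {M : CoxeterMatrix B} (cs : CoxeterSystem M W)

theorem prod_map_alternatingWord_two_mul {G : Type*} [Monoid G] (f : B → G) (i j : B) (m : ℕ) :
    ((alternatingWord i j (2 * m)).map f).prod = (f i * f j) ^ m := by
  induction m with
  | zero => simp [alternatingWord]
  | succ m ih =>
    rw [show 2 * (m + 1) = 2 * m + 1 + 1 by ring, alternatingWord_succ', alternatingWord_succ']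
    simp [ih, pow_succ', mul_assoc]

theorem even_count_leftInvSeq_alternatingWord [DecidableEq W] (i j : B) (t : W) :
    Even ((cs.leftInvSeq (alternatingWord i j (2 * M i j))).count t) := by
  set L := cs.leftInvSeq (alternatingWord i j (2 * M i j))
  have hperiod : L.drop (M i j) = L.take (M i j) := by
    apply List.ext_getElem (by simp [L]; omega)
    intro k h₁ h₂
    simp only [List.length_drop, length_leftInvSeq, length_alternatingWord, L] at h₁
    rw [List.getElem_drop, List.getElem_take,
      getElem_leftInvSeq_alternatingWord _ _ _ _ _ (by omega),
      getElem_leftInvSeq_alternatingWord _ _ _ _ _ (by omega), prod_alternatingWord_eq_mul_pow,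
      prod_alternatingWord_eq_mul_pow, show (2 * (M i j + k) + 1) / 2 = M i j + k by omega,
      show (2 * k + 1) / 2 = k by omega, pow_add, simple_mul_simple_pow', one_mul]
    simp
  rw [← List.take_append_drop (M i j) L, List.count_append, hperiod]
  exact ⟨_, rfl⟩

theorem conj_simple_eq_simple_iff (i : B) (x : W) :
    MulAut.conj (cs.simple i) x = cs.simple i ↔ x = cs.simple i := by
  rw [← MulEquiv.eq_symm_apply]
  simp

section Tits

variable [DecidableEq W]

noncomputable def titsPerm (i : B) : Equiv.Perm (W × ZMod 2) :=
  Function.Involutive.toPerm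
    (fun p => (MulAut.conj (cs.simple i) p.1, p.2 + if p.1 = cs.simple i then 1 else 0)) (by
      rintro ⟨t, e⟩
      simp only [← MulAut.mul_apply, ← map_mul, simple_mul_simple_self, map_one, MulAut.one_apply,
        conj_simple_eq_simple_iff, CharTwo.add_cancel_right])

theorem titsPerm_apply (i : B) (t : W) (e : ZMod 2) :
    cs.titsPerm i (t, e) =
      (MulAut.conj (cs.simple i) t, e + if t = cs.simple i then 1 else 0) := rfl

theorem prod_map_titsPerm_apply (ω : List B) (t : W) (e : ZMod 2) :
    (ω.map cs.titsPerm).prod (t, e) =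
      (MulAut.conj (cs.wordProd ω) t,
        e + ((cs.leftInvSeq ω).count (MulAut.conj (cs.wordProd ω) t) : ZMod 2)) := by
  induction ω with
  | nil => simp
  | cons i ω ih =>
    rw [List.map_cons, List.prod_cons, Equiv.Perm.mul_apply, ih, titsPerm_apply, wordProd_cons,
      map_mul, MulAut.mul_apply, leftInvSeq, count_cons,
      count_map_of_injective _ _ (MulAut.conj _).injective]
    simp only [beq_iff_eq, eq_comm (a := cs.simple i), conj_simple_eq_simple_iff, Nat.cast_add,
      Nat.cast_ite, Nat.cast_one, Nat.cast_zero, add_assoc]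

theorem isLiftable_titsPerm : M.IsLiftable cs.titsPerm := by
  intro i j
  rw [← prod_map_alternatingWord_two_mul]
  ext1 ⟨t, e⟩
  have hprod : cs.wordProd (alternatingWord i j (2 * M i j)) = 1 := by
    rw [wordProd, prod_map_alternatingWord_two_mul, simple_mul_simple_pow]
  obtain ⟨k, hk⟩ := cs.even_count_leftInvSeq_alternatingWord i j t
  simp [prod_map_titsPerm_apply, hprod, hk, CharTwo.add_self_eq_zero]

noncomputable def titsHom : W →* Equiv.Perm (W × ZMod 2) :=
  cs.lift ⟨cs.titsPerm, cs.isLiftable_titsPerm⟩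

theorem titsHom_wordProd (ω : List B) : cs.titsHom (cs.wordProd ω) = (ω.map cs.titsPerm).prod := by
  rw [wordProd, map_list_prod, List.map_map]
  congr 2
  funext i
  exact cs.lift_apply_simple cs.isLiftable_titsPerm i

/-- `titsCocycle w x` is the parity of the number of occurrences of `w x w⁻¹` in the left
inversion sequence of any word for `w` (see `titsCocycle_wordProd`); it is well defined because
`titsHom` is a homomorphism. -/
noncomputable def titsCocycle (w x : W) : ZMod 2 := (cs.titsHom w (x, 0)).2

theorem titsCocycle_wordProd (ω : List B) (x : W) :
    cs.titsCocycle (cs.wordProd ω) x = (cs.leftInvSeq ω).count (MulAut.conj (cs.wordProd ω) x) := by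
  simp [titsCocycle, titsHom_wordProd, prod_map_titsPerm_apply]

theorem titsHom_apply (w x : W) (e : ZMod 2) :
    cs.titsHom w (x, e) = (MulAut.conj w x, e + cs.titsCocycle w x) := by
  obtain ⟨ω, rfl⟩ := cs.wordProd_surjective w
  rw [titsCocycle_wordProd, titsHom_wordProd, prod_map_titsPerm_apply]

theorem titsCocycle_mul (u v x : W) :
    cs.titsCocycle (u * v) x = cs.titsCocycle v x + cs.titsCocycle u (MulAut.conj v x) := by
  rw [titsCocycle, map_mul, Equiv.Perm.mul_apply, titsHom_apply cs v, titsHom_apply, zero_add]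

@[simp] theorem titsCocycle_one (x : W) : cs.titsCocycle 1 x = 0 := by
  simp [titsCocycle]

theorem titsCocycle_simple_simple (i : B) : cs.titsCocycle (cs.simple i) (cs.simple i) = 1 := by
  simp [titsCocycle, titsHom, titsPerm_apply]

theorem IsReflection.titsCocycle_self {t : W} (ht : cs.IsReflection t) :
    cs.titsCocycle t t = 1 := by
  obtain ⟨u, i, rfl⟩ := ht
  have h₁ : MulAut.conj u⁻¹ (u * cs.simple i * u⁻¹) = cs.simple i := by simp [mul_assoc]
  have h₂ : MulAut.conj (cs.simple i * u⁻¹) (u * cs.simple i * u⁻¹) = cs.simple i := by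
    simp [mul_assoc]
  have hinv := cs.titsCocycle_mul u u⁻¹ (u * cs.simple i * u⁻¹)
  have hsplit := cs.titsCocycle_mul u (cs.simple i * u⁻¹) (u * cs.simple i * u⁻¹)
  rw [cs.titsCocycle_mul (cs.simple i) u⁻¹, h₁, h₂, titsCocycle_simple_simple,
    ← mul_assoc] at hsplit
  rw [mul_inv_cancel, titsCocycle_one, h₁] at hinv
  rw [hsplit]
  linear_combination hinv.symm

end Tits

theorem mem_leftInvSeq_of_isLeftInversion {ω : List B} {t : W}
    (ht : cs.IsLeftInversion (cs.wordProd ω) t) : t ∈ cs.leftInvSeq ω := by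
  classical
  obtain ⟨ψ, hψ, hψω⟩ := cs.exists_isReduced (t * cs.wordProd ω)
  have hωψ : cs.wordProd ω = t * cs.wordProd ψ := by
    rw [← hψω, ← mul_assoc, ht.1.mul_self, one_mul]
  have hψt : t ∉ cs.leftInvSeq ψ := fun h => by
    have := (cs.isLeftInversion_of_mem_leftInvSeq hψ h).2
    rw [← hψω, ← mul_assoc, ht.1.mul_self, one_mul] at this
    exact lt_asymm ht.2 this
  set x := MulAut.conj (cs.wordProd ω)⁻¹ t
  have hωx : MulAut.conj (cs.wordProd ω) x = t := by simp only [x, map_inv, MulAut.apply_inv_self]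
  have hψx : MulAut.conj (cs.wordProd ψ) x = t := by
    rw [← hψω, map_mul, MulAut.mul_apply, hωx, MulAut.conj_apply, ht.1.inv, ht.1.mul_self, one_mul]
  have hcount := cs.titsCocycle_mul t (cs.wordProd ψ) x
  rw [← hωψ, titsCocycle_wordProd, titsCocycle_wordProd, hωx, hψx, count_eq_zero_of_not_mem hψt,
    ht.1.titsCocycle_self] at hcount
  by_contra h
  simp [count_eq_zero_of_not_mem h] at hcount

end CoxeterSystem

theorem Directed.exists_subset_of_finite {α ι : Type*} [Nonempty ι] {f : ι → Set α}
    (hf : Directed (· ⊆ ·) f) {T : Set α} (hT : T.Finite) (hTf : T ⊆ ⋃ i, f i) :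
    ∃ i, T ⊆ f i := by
  simpa using hf.exists_mem_subset_of_finset_subset_biUnion (s := hT.toFinset) (by simpa using hTf)

namespace CoxInf

open CoxeterSystem

variable {B W : Type*} [Group W] {M : CoxeterMatrix B} (cs : CoxeterSystem M W)

theorem invSet_wordProd {ω : List B} (hω : cs.IsReduced ω) :
    invSet cs (cs.wordProd ω) = {t | t ∈ cs.leftInvSeq ω} :=
  Set.ext fun _ => ⟨cs.mem_leftInvSeq_of_isLeftInversion, cs.isLeftInversion_of_mem_leftInvSeq hω⟩

@[simp] theorem invSet_one : invSet cs 1 = ∅ := by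
  simp [invSet, IsLeftInversion]

theorem invSet_finite (w : W) : (invSet cs w).Finite := by
  obtain ⟨ω, hω, rfl⟩ := cs.exists_isReduced w
  rw [invSet_wordProd cs hω]
  exact (cs.leftInvSeq ω).finite_toSet

theorem ncard_invSet (w : W) : (invSet cs w).ncard = cs.length w := by
  classical
  obtain ⟨ω, hω, rfl⟩ := cs.exists_isReduced w
  rw [invSet_wordProd cs hω, ← List.coe_toFinset, Set.ncard_coe_finset,
    List.toFinset_card_of_nodup hω.nodup_leftInvSeq, length_leftInvSeq, hω]

theorem invSet_wordProd_take_subset {ω : List B} (hω : cs.IsReduced ω) (n : ℕ) :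
    invSet cs (cs.wordProd (ω.take n)) ⊆ invSet cs (cs.wordProd ω) := by
  rw [invSet_wordProd cs (hω.take n), invSet_wordProd cs hω, leftInvSeq_take]
  exact fun _ => List.mem_of_mem_take

theorem mem_invSet_iff_titsCocycle [DecidableEq W] (w t : W) :
    t ∈ invSet cs w ↔ cs.titsCocycle w (MulAut.conj w⁻¹ t) = 1 := by
  obtain ⟨ω, hω, rfl⟩ := cs.exists_isReduced w
  rw [invSet_wordProd cs hω, titsCocycle_wordProd, ← MulAut.mul_apply, ← map_mul, mul_inv_cancel,
    map_one, MulAut.one_apply, hω.nodup_leftInvSeq.count]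
  split_ifs with h <;> simp [h]

theorem invSet_mul (a b : W) :
    invSet cs (a * b) = symmDiff (invSet cs a) (MulAut.conj a '' invSet cs b) := by
  classical
  ext t
  set s := MulAut.conj a⁻¹ t
  have hmem : t ∈ MulAut.conj a '' invSet cs b ↔ s ∈ invSet cs b :=
    ⟨by rintro ⟨r, hr, rfl⟩; simpa only [s, map_inv, MulAut.inv_apply_self],
      fun h => ⟨_, h, by simp only [s, map_inv, MulAut.apply_inv_self]⟩⟩
  have h₁ : MulAut.conj (a * b)⁻¹ t = MulAut.conj b⁻¹ s := by simp [s, mul_assoc]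
  have h₂ : MulAut.conj b (MulAut.conj b⁻¹ s) = s := by rw [map_inv, MulAut.apply_inv_self]
  rw [Set.mem_symmDiff, hmem, mem_invSet_iff_titsCocycle, mem_invSet_iff_titsCocycle,
    mem_invSet_iff_titsCocycle, titsCocycle_mul, h₁, h₂]
  generalize cs.titsCocycle a s = p, cs.titsCocycle b (MulAut.conj b⁻¹ s) = q
  revert p q
  decide

theorem length_inv_mul_add_length {a x : W} (h : invSet cs a ⊆ invSet cs x) :
    cs.length (a⁻¹ * x) + cs.length a = cs.length x := by
  have himage : MulAut.conj a '' invSet cs (a⁻¹ * x) = invSet cs x \ invSet cs a := by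
    have hx := invSet_mul cs a (a⁻¹ * x)
    rw [mul_inv_cancel_left] at hx
    rw [← symmDiff_of_le h, hx, symmDiff_symmDiff_cancel_left]
  rw [← ncard_invSet, ← ncard_invSet, ← ncard_invSet,
    ← Set.ncard_image_of_injective _ (MulAut.conj a).injective, himage,
    Set.ncard_sdiff_add_ncard_of_subset h (invSet_finite cs x)]

theorem exists_isReduced_append {ω : List B} (hω : cs.IsReduced ω) {x : W}
    (h : invSet cs (cs.wordProd ω) ⊆ invSet cs x) :
    ∃ ω' : List B, cs.IsReduced (ω ++ ω') ∧ cs.wordProd (ω ++ ω') = x := by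
  obtain ⟨ω', hω', hω'x⟩ := cs.exists_isReduced ((cs.wordProd ω)⁻¹ * x)
  have hprod : cs.wordProd (ω ++ ω') = x := by rw [wordProd_append, ← hω'x, mul_inv_cancel_left]
  refine ⟨ω', ?_, hprod⟩
  rw [CoxeterSystem.IsReduced, hprod, ← length_inv_mul_add_length cs h, hω'x, hω', hω,
    List.length_append, add_comm]

theorem prefixWord_take {α : Type*} (ω : ℕ → α) {m n : ℕ} (h : n ≤ m) :
    (prefixWord ω m).take n = prefixWord ω n := by
  apply List.ext_getElem <;> simp [prefixWord, h]

theorem exists_prefixWord_eq_take {α : Type*} (l : ℕ → List α) (hl : ∀ k, l k <+: l (k + 1))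
    (hlen : ∀ n, ∃ k, n < (l k).length) :
    ∃ ω : ℕ → α, ∀ n k, n ≤ (l k).length → prefixWord ω n = (l k).take n := by
  choose K hK using hlen
  have hmono : ∀ {k m}, k ≤ m → l k <+: l m := fun h =>
    Nat.le_induction (List.prefix_refl _) (fun _ _ ih => ih.trans (hl _)) _ h
  refine ⟨fun n => (l (K n))[n]'(hK n), fun n k hn =>
    List.ext_getElem (by simp [prefixWord, hn]) ?_⟩
  intro i hi _
  simp only [prefixWord, List.length_ofFn] at hi
  simp only [prefixWord, List.getElem_ofFn, List.getElem_take]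
  rcases le_total (K i) k with h | h
  · exact (hmono h).getElem _
  · exact ((hmono h).getElem _).symm

variable {cs} in
theorem monotone_invSet_prefixWord {ω : ℕ → B} (hω : IsInfRedExpr cs ω) :
    Monotone fun n => invSet cs (cs.wordProd (prefixWord ω n)) := fun n m h => by
  dsimp only
  rw [← prefixWord_take ω h]
  exact invSet_wordProd_take_subset cs (hω m) n

theorem exists_invSet_subset_barInv (v : W ⊕ {ω : ℕ → B // IsInfRedExpr cs ω}) {T : Set W}
    (hT : T.Finite) (hTv : T ⊆ barInv cs v) :
    ∃ x, T ⊆ invSet cs x ∧ invSet cs x ⊆ barInv cs v := by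
  rcases v with x | ⟨ω, hω⟩
  · exact ⟨x, hTv, subset_rfl⟩
  · obtain ⟨n, hn⟩ :=
      Directed.exists_subset_of_finite (monotone_invSet_prefixWord hω).directed_le hT hTv
    exact ⟨_, hn, Set.subset_iUnion (fun n => invSet cs (cs.wordProd (prefixWord ω n))) n⟩

def IsDirectedUnionOfInvSets (U : Set W) : Prop :=
  ∀ T : Set W, T.Finite → T ⊆ U → ∃ x, T ⊆ invSet cs x ∧ invSet cs x ⊆ U

theorem isDirectedUnionOfInvSets_iUnion_barInv {I : Type*}
    {w : I → W ⊕ {ω : ℕ → B // IsInfRedExpr cs ω}}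
    (hchain : ∀ i j : I, barInv cs (w i) ⊆ barInv cs (w j) ∨ barInv cs (w j) ⊆ barInv cs (w i)) :
    IsDirectedUnionOfInvSets cs (⋃ i, barInv cs (w i)) := by
  intro T hT hTU
  rcases isEmpty_or_nonempty I with hI | hI
  · exact ⟨1, by simpa using hTU, by simp⟩
  have hdir : Directed (· ⊆ ·) fun i => barInv cs (w i) := fun i j =>
    (hchain i j).elim (fun h => ⟨j, h, subset_rfl⟩) (fun h => ⟨i, subset_rfl, h⟩)
  obtain ⟨i, hi⟩ := hdir.exists_subset_of_finite hT hTU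
  obtain ⟨x, hTx, hxi⟩ := exists_invSet_subset_barInv cs (w i) hT hi
  exact ⟨x, hTx, hxi.trans (Set.subset_iUnion (fun i => barInv cs (w i)) i)⟩

theorem exists_lt_length_of_infinite_iUnion {x : ℕ → W} (hx : Monotone fun k => invSet cs (x k))
    (hinf : (⋃ k, invSet cs (x k)).Infinite) (n : ℕ) : ∃ k, n < cs.length (x k) := by
  obtain ⟨T, hTx, hT, hTcard⟩ := hinf.exists_subset_ncard_eq (n + 1)
  obtain ⟨k, hk⟩ := Directed.exists_subset_of_finite hx.directed_le hT hTx
  have hcard := Set.ncard_le_ncard hk (invSet_finite cs _)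
  rw [hTcard, ncard_invSet] at hcard
  exact ⟨k, hcard⟩

theorem exists_isInfRedExpr_iUnion_eq {x : ℕ → W} (hx : Monotone fun k => invSet cs (x k))
    (hinf : (⋃ k, invSet cs (x k)).Infinite) :
    ∃ ω, IsInfRedExpr cs ω ∧
      ⋃ n, invSet cs (cs.wordProd (prefixWord ω n)) = ⋃ k, invSet cs (x k) := by
  have step : ∀ k, ∀ l : {l : List B // cs.IsReduced l ∧ cs.wordProd l = x k},
      ∃ l' : {l' : List B // cs.IsReduced l' ∧ cs.wordProd l' = x (k + 1)}, l.1 <+: l'.1 := by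
    rintro k ⟨l, hl, hlx⟩
    obtain ⟨e, he, hex⟩ :=
      exists_isReduced_append cs hl (x := x (k + 1)) (by rw [hlx]; exact hx k.le_succ)
    exact ⟨⟨l ++ e, he, hex⟩, List.prefix_append l e⟩
  choose next hnext using step
  obtain ⟨l₀, hl₀, hx₀⟩ := cs.exists_isReduced (x 0)
  let L : (k : ℕ) → {l : List B // cs.IsReduced l ∧ cs.wordProd l = x k} :=
    fun k => Nat.rec ⟨l₀, hl₀, hx₀.symm⟩ next k
  have hlen : ∀ n, ∃ k, n < (L k).1.length := fun n => by
    obtain ⟨k, hk⟩ := exists_lt_length_of_infinite_iUnion cs hx hinf n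
    exact ⟨k, by rwa [← (L k).2.2, (L k).2.1] at hk⟩
  obtain ⟨ω, hω⟩ := exists_prefixWord_eq_take (fun k => (L k).1) (fun k => hnext k (L k)) hlen
  have hred : IsInfRedExpr cs ω := fun n => by
    obtain ⟨k, hk⟩ := hlen n
    rw [hω n k hk.le]
    exact (L k).2.1.take n
  refine ⟨ω, hred, (Set.iUnion_subset fun n => ?_).antisymm (Set.iUnion_subset fun k => ?_)⟩
  · obtain ⟨k, hk⟩ := hlen n
    rw [hω n k hk.le]
    refine (invSet_wordProd_take_subset cs (L k).2.1 n).trans ?_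
    rw [(L k).2.2]
    exact Set.subset_iUnion (fun k => invSet cs (x k)) k
  · rw [← (L k).2.2, ← List.take_length (l := (L k).1), ← hω _ k le_rfl]
    exact Set.subset_iUnion (fun n => invSet cs (cs.wordProd (prefixWord ω n))) _

theorem exists_monotone_invSet_iUnion_eq [Countable W] {U : Set W}
    (hU : IsDirectedUnionOfInvSets cs U) (hne : U.Nonempty) :
    ∃ x : ℕ → W, (Monotone fun k => invSet cs (x k)) ∧ ⋃ k, invSet cs (x k) = U := by
  obtain ⟨f, rfl⟩ := U.to_countable.exists_eq_range hne
  have step : ∀ y : {y : W // invSet cs y ⊆ Set.range f}, ∀ k,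
      ∃ z : {z : W // invSet cs z ⊆ Set.range f}, insert (f k) (invSet cs y) ⊆ invSet cs z := by
    rintro ⟨y, hy⟩ k
    obtain ⟨z, hyz, hz⟩ :=
      hU _ ((invSet_finite cs y).insert _) (Set.insert_subset (Set.mem_range_self k) hy)
    exact ⟨⟨z, hz⟩, hyz⟩
  choose next hnext using step
  let x : ℕ → {y : W // invSet cs y ⊆ Set.range f} :=
    fun k => Nat.rec ⟨1, by simp⟩ (fun k y => next y k) k
  have hsucc : ∀ k, insert (f k) (invSet cs (x k).1) ⊆ invSet cs (x (k + 1)).1 := fun k =>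
    hnext (x k) k
  refine ⟨fun k => (x k).1,
    monotone_nat_of_le_succ fun k => (Set.subset_insert _ _).trans (hsucc k),
    (Set.iUnion_subset fun k => (x k).2).antisymm ?_⟩
  rintro _ ⟨k, rfl⟩
  exact Set.mem_iUnion.2 ⟨k + 1, hsucc k (Set.mem_insert _ _)⟩

theorem exists_barInv_eq [Countable W] {U : Set W} (hU : IsDirectedUnionOfInvSets cs U) :
    ∃ v : W ⊕ {ω : ℕ → B // IsInfRedExpr cs ω}, barInv cs v = U := by
  by_cases hfin : U.Finite
  · obtain ⟨x, hUx, hxU⟩ := hU U hfin subset_rfl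
    exact ⟨.inl x, hxU.antisymm hUx⟩
  obtain ⟨x, hx, hxU⟩ := exists_monotone_invSet_iUnion_eq cs hU (Set.Infinite.nonempty hfin)
  obtain ⟨ω, hω, hωx⟩ := exists_isInfRedExpr_iUnion_eq cs hx (hxU ▸ hfin)
  exact ⟨.inr ⟨ω, hω⟩, hωx.trans hxU⟩

end CoxInf

open CoxInf in
/-- If `(W,S)` is a countably generated Coxeter system and `{w_i}_{i ∈ I}` is an ascending
chain in `W̄` under the weak order, then the join `⋁_i w_i` exists in `W̄` and its inversion
set is `⋃_{i ∈ I} Φ_{w_i}`. -/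
theorem chain_join_in_wbar
    {B : Type*} {W : Type*} [Group W] [Countable B] {M : CoxeterMatrix B}
    (cs : CoxeterSystem M W) {I : Type*}
    (w : I → W ⊕ {ω : ℕ → B // IsInfRedExpr cs ω})
    (hchain : ∀ i j : I, barInv cs (w i) ⊆ barInv cs (w j) ∨
      barInv cs (w j) ⊆ barInv cs (w i)) :
    ∃ v : W ⊕ {ω : ℕ → B // IsInfRedExpr cs ω},
      (∀ i, barInv cs (w i) ⊆ barInv cs v) ∧
      (∀ u : W ⊕ {ω : ℕ → B // IsInfRedExpr cs ω},
        (∀ i, barInv cs (w i) ⊆ barInv cs u) → barInv cs v ⊆ barInv cs u) ∧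
      barInv cs v = ⋃ i, barInv cs (w i) := by
  have : Countable W := cs.wordProd_surjective.countable
  obtain ⟨v, hv⟩ := exists_barInv_eq cs (isDirectedUnionOfInvSets_iUnion_barInv cs hchain)
  exact ⟨v, fun i => hv ▸ Set.subset_iUnion (fun i => barInv cs (w i)) i,
    fun u hu => hv ▸ Set.iUnion_subset hu, hv⟩
end

section
/- Let Φ be an irreducible crystallographic root system with positive system Φ⁺, simple system Π, L ⊊ Π, and let (Φ⁺_{L,∅})_n = {α + kδ | α ∈ Φ⁺_{L,∅}, 0 ≤ k ≤ n} in the affine positive system Φ̃⁺. Then the closure of (Φ⁺_{L,∅})_n in Φ̃⁺ equals {α + kδ | α ∈ Φ⁺_{L,∅}, 0 ≤ k ≤ n·d_L(α)}; in particular this closure is finite, and moreover it is biclosed in Φ̃⁺. -/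
/-!
Let `h` be the linear functional vanishing on `L` and equal to `1` on the other simple roots,
the `L`-level. It is `ℕ`-valued on `Φ⁺`, and `Φ⁺_{L,∅}` consists exactly of the roots of positive
level. Every root of level at least `2` is the sum of two roots of positive level: peel off a
simple root `s` with `⟪α, s⟫ > 0`, and when `s ∈ L` recombine `s` with one of the pieces of
`α - s`, or reflect both pieces in `s`. Hence `d_L = h`, and the closure of `(Φ⁺_{L,∅})_n` is
the slice `{α + kδ ∈ Φ̃⁺ | h α > 0, k ≤ n h α}`, cut out of `Φ̃⁺` by two linear inequalities;
such a slice and its complement are closed under nonnegative combinations.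
-/

open scoped RealInnerProductSpace

namespace AffineBiclosed

variable {V : Type*} [NormedAddCommGroup V] [InnerProductSpace ℝ V]

/-- An irreducible crystallographic root system in the Euclidean space `V`. -/
structure IsIrrCrystRootSystem (Φ : Set V) : Prop where
  finite : Φ.Finite
  nonzero : (0 : V) ∉ Φ
  spanning : Submodule.span ℝ Φ = ⊤
  reflect_mem : ∀ α ∈ Φ, ∀ β ∈ Φ, β - (2 * ⟪β, α⟫ / ⟪α, α⟫) • α ∈ Φ
  crystallographic : ∀ α ∈ Φ, ∀ β ∈ Φ, ∃ k : ℤ, (k : ℝ) = 2 * ⟪β, α⟫ / ⟪α, α⟫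
  reduced : ∀ α ∈ Φ, ∀ t : ℝ, t • α ∈ Φ → t = 1 ∨ t = -1
  irreducible : ∀ Φ₁ Φ₂ : Set V, Φ₁ ∪ Φ₂ = Φ → Disjoint Φ₁ Φ₂ →
      (∀ α ∈ Φ₁, ∀ β ∈ Φ₂, ⟪α, β⟫ = 0) → Φ₁ = ∅ ∨ Φ₂ = ∅

/-- `Pos` is a positive system of the root system `Φ`. -/
def IsPositiveSystem (Φ Pos : Set V) : Prop :=
  ∃ f : V →ₗ[ℝ] ℝ, (∀ α ∈ Φ, f α ≠ 0) ∧ Pos = {α ∈ Φ | 0 < f α}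

/-- The simple system of a positive system: its indecomposable elements. -/
def simples (Pos : Set V) : Set V :=
  {α ∈ Pos | ¬ ∃ β ∈ Pos, ∃ γ ∈ Pos, α = β + γ}

/-- The root subsystem of `Φ` generated by a set `Δ` of simple roots. -/
def subsys (Φ Δ : Set V) : Set V := Φ ∩ (Submodule.span ℝ Δ : Set V)

/-- The biclosed set `Ψ⁺_{L,M} = (Ψ⁺ \ Φ_L) ∪ Φ_M` in `Φ`. -/
def posLM (Φ Pos L M : Set V) : Set V := (Pos \ subsys Φ L) ∪ subsys Φ M

section Closure

variable {E : Type*} [AddCommGroup E] [Module ℝ E]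

/-- `Γ` is closed in `T`. -/
def IsClosedIn (T Γ : Set E) : Prop :=
  Γ ⊆ T ∧ ∀ a ∈ Γ, ∀ b ∈ Γ, ∀ k₁ k₂ : ℝ, 0 ≤ k₁ → 0 ≤ k₂ →
    k₁ • a + k₂ • b ∈ T → k₁ • a + k₂ • b ∈ Γ

/-- `Γ` is biclosed in `T`. -/
def IsBiclosedIn (T Γ : Set E) : Prop := IsClosedIn T Γ ∧ IsClosedIn T (T \ Γ)

/-- The closure of `X` in `T`: the smallest subset of `T` closed in `T` containing `X`. -/
def closureIn (T X : Set E) : Set E := ⋂₀ {Γ : Set E | X ⊆ Γ ∧ IsClosedIn T Γ}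

end Closure

/-- For `Γ ⊆ Φ`, the set `Γ̂ ⊆ V × ℝ`, where `δ = (0,1)`; positivity is measured by the
standard positive system `Pos`. -/
def hat (Pos Γ : Set V) : Set (V × ℝ) :=
  {x | ∃ α ∈ Γ, ∃ n : ℕ, x.1 = α ∧
    ((α ∈ Pos ∧ x.2 = (n : ℝ)) ∨ (α ∉ Pos ∧ x.2 = (n : ℝ) + 1))}

/-- The reflection in the affine root `a`, as a function on `V × ℝ`, with respect to the
degenerate bilinear form `⟨(v,s),(w,t)⟩ = ⟪v,w⟫`. -/
noncomputable def reflVec (a : V × ℝ) (x : V × ℝ) : V × ℝ :=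
  x - (2 * ⟪x.1, a.1⟫ / ⟪a.1, a.1⟫) • a

theorem reflVec_involutive (a : V × ℝ) : Function.Involutive (reflVec a) := by
  intro x
  by_cases h : ⟪a.1, a.1⟫ = 0
  · simp only [reflVec, h, div_zero, zero_smul, sub_zero]
  · unfold reflVec
    have h1 : (x - (2 * ⟪x.1, a.1⟫ / ⟪a.1, a.1⟫) • a).1
        = x.1 - (2 * ⟪x.1, a.1⟫ / ⟪a.1, a.1⟫) • a.1 := rfl
    rw [h1]
    have key : 2 * ⟪x.1 - (2 * ⟪x.1, a.1⟫ / ⟪a.1, a.1⟫) • a.1, a.1⟫ / ⟪a.1, a.1⟫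
        = -(2 * ⟪x.1, a.1⟫ / ⟪a.1, a.1⟫) := by
      rw [inner_sub_left, real_inner_smul_left]
      field_simp
      ring
    rw [key, neg_smul, sub_neg_eq_add, sub_add_cancel]

/-- The reflection in the affine root `a`, as a permutation of `V × ℝ`. -/
noncomputable def reflPerm (a : V × ℝ) : Equiv.Perm (V × ℝ) :=
  Function.Involutive.toPerm _ (reflVec_involutive a)

/-- The affine Weyl group of `Φ`, realized as the group of permutations of `V × ℝ`
generated by the reflections in the affine roots. -/
noncomputable def affineWeyl (Φ Pos : Set V) : Subgroup (Equiv.Perm (V × ℝ)) :=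
  Subgroup.closure (reflPerm '' hat Pos Φ)

/-- The inversion set `Φ_w = {a ∈ Φ̃⁺ | w⁻¹ a ∈ −Φ̃⁺}`. -/
def invSetOf (Φ Pos : Set V) (w : Equiv.Perm (V × ℝ)) : Set (V × ℝ) :=
  {a ∈ hat Pos Φ | -(w⁻¹ a) ∈ hat Pos Φ}

/-- The product of the reflections in the listed affine roots. -/
noncomputable def wordProd (l : List (V × ℝ)) : Equiv.Perm (V × ℝ) :=
  (l.map reflPerm).prod

/-- The simple affine roots: the indecomposable elements of `Φ̃⁺`. -/
def affSimples (Φ Pos : Set V) : Set (V × ℝ) :=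
  {a ∈ hat Pos Φ | ¬ ∃ b ∈ hat Pos Φ, ∃ c ∈ hat Pos Φ, a = b + c}

/-- `l` is a reduced word (in the simple affine reflections). -/
def IsReducedWord (Φ Pos : Set V) (l : List (V × ℝ)) : Prop :=
  (∀ a ∈ l, a ∈ affSimples Φ Pos) ∧
    ∀ l' : List (V × ℝ), (∀ a ∈ l', a ∈ affSimples Φ Pos) →
      wordProd l' = wordProd l → l.length ≤ l'.length

/-- The length-`n` prefix of an infinite word. -/
def prefixWord (ω : ℕ → V × ℝ) (n : ℕ) : List (V × ℝ) :=
  List.ofFn (fun i : Fin n => ω i)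

/-- `ω` is an infinite reduced expression. -/
def IsInfRedExpr (Φ Pos : Set V) (ω : ℕ → V × ℝ) : Prop :=
  ∀ n, IsReducedWord Φ Pos (prefixWord ω n)

/-- The inversion set of an infinite reduced expression. -/
def infInvSet (Φ Pos : Set V) (ω : ℕ → V × ℝ) : Set (V × ℝ) :=
  ⋃ n, invSetOf Φ Pos (wordProd (prefixWord ω n))

/-- The action `x·Γ = (Φ_x \ x(−Γ)) ∪ (x(Γ) \ (−Φ_x))` of the affine Weyl group on
biclosed sets. -/
def dotAct (Φ Pos : Set V) (x : Equiv.Perm (V × ℝ)) (Γ : Set (V × ℝ)) : Set (V × ℝ) :=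
  (invSetOf Φ Pos x \ (⇑x '' (-Γ))) ∪ ((⇑x '' Γ) \ (-(invSetOf Φ Pos x)))

end AffineBiclosed

namespace AffineBiclosed

variable {V : Type*} [NormedAddCommGroup V] [InnerProductSpace ℝ V]

open Classical in
/-- The function `d_L : Φ⁺ → ℕ`: for `α ∈ Φ⁺_{L,∅}`, the maximal `n` such that `α` can be
written as the sum of `n` elements of `Φ⁺_{L,∅}`; and `0` otherwise. -/
noncomputable def dL (Φ Pos L : Set V) (α : V) : ℕ :=
  if α ∈ posLM Φ Pos L ∅ then
    sSup {n : ℕ | ∃ l : List V, l.length = n ∧ (∀ β ∈ l, β ∈ posLM Φ Pos L ∅) ∧ l.sum = α}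
  else 0

end AffineBiclosed

theorem Set.Finite.induction_on_lt {ι : Type*} {s : Set ι} (hs : s.Finite) (g : ι → ℝ)
    {P : ι → Prop} (ih : ∀ a ∈ s, (∀ b ∈ s, g b < g a → P b) → P a) : ∀ a ∈ s, P a := by
  have : IsStrictOrder ι (InvImage (· < ·) g) := {}
  exact fun a ha => hs.wellFoundedOn.induction ha ih

namespace AffineBiclosed

section Closure

variable {E : Type*} [AddCommGroup E] [Module ℝ E] {T X C : Set E}

theorem closureIn_eq_of_isLeast (hC : IsLeast {Γ | X ⊆ Γ ∧ IsClosedIn T Γ} C) :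
    closureIn T X = C :=
  hC.csInf_eq

theorem isClosedIn_setOf_pos_and_nonneg (hT : (0 : E) ∉ T) (ψ φ : E →ₗ[ℝ] ℝ) :
    IsClosedIn T {x ∈ T | 0 < ψ x ∧ 0 ≤ φ x} := by
  refine ⟨fun x hx => hx.1, ?_⟩
  rintro a ⟨-, hψa, hφa⟩ b ⟨-, hψb, hφb⟩ k₁ k₂ hk₁ hk₂ hT'
  simp only [Set.mem_ofPred_eq, map_add, map_smul, smul_eq_mul]
  refine ⟨hT', ?_, by positivity⟩
  rcases hk₁.eq_or_lt with rfl | hk₁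
  · rcases hk₂.eq_or_lt with rfl | hk₂
    · simp only [zero_smul, add_zero] at hT'
      exact absurd hT' hT
    · positivity
  · positivity

theorem isClosedIn_diff_setOf_pos_and_nonneg {ψ φ : E →ₗ[ℝ] ℝ}
    (hT : ∀ x ∈ T, ψ x ≤ 0 → φ x ≤ 0) :
    IsClosedIn T (T \ {x ∈ T | 0 < ψ x ∧ 0 ≤ φ x}) := by
  have key : ∀ x ∈ T \ {x ∈ T | 0 < ψ x ∧ 0 ≤ φ x}, ∀ k : ℝ, 0 ≤ k →
      k * φ x ≤ 0 ∧ (0 < k * ψ x → k * φ x < 0) := by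
    rintro x ⟨hx, hxC⟩ k hk
    have hφ : φ x ≤ 0 := by
      by_cases hψ : 0 < ψ x
      · exact le_of_not_gt fun hφ => hxC ⟨hx, hψ, hφ.le⟩
      · exact hT x hx (not_lt.mp hψ)
    refine ⟨mul_nonpos_of_nonneg_of_nonpos hk hφ, fun hkψ => ?_⟩
    have hk : 0 < k := lt_of_le_of_ne hk (by rintro rfl; simp at hkψ)
    exact mul_neg_of_pos_of_neg hk
      (lt_of_le_of_ne hφ fun h0 => hxC ⟨hx, pos_of_mul_pos_right hkψ hk.le, h0.ge⟩)
  refine ⟨Set.sdiff_subset, fun a ha b hb k₁ k₂ hk₁ hk₂ hT' => ⟨hT', ?_⟩⟩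
  rintro ⟨-, hψ, hφ⟩
  simp only [map_add, map_smul, smul_eq_mul] at hψ hφ
  obtain ⟨ha₁, ha₂⟩ := key a ha k₁ hk₁
  obtain ⟨hb₁, hb₂⟩ := key b hb k₂ hk₂
  rcases lt_or_ge 0 (k₁ * ψ a) with h | h
  · linarith [ha₂ h]
  · linarith [hb₂ (by linarith)]

end Closure

section RootSystem

variable {V : Type*} [NormedAddCommGroup V] [InnerProductSpace ℝ V] {Φ : Set V} {α β : V}

noncomputable def rootReflection (α x : V) : V := x - (2 * ⟪x, α⟫ / ⟪α, α⟫) • α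

theorem rootReflection_add (α x y : V) :
    rootReflection α (x + y) = rootReflection α x + rootReflection α y := by
  simp only [rootReflection, inner_add_left, mul_add, add_div, add_smul]
  abel

theorem rootReflection_sub_self_of_cartan_eq_one (h : 2 * ⟪α, β⟫ / ⟪β, β⟫ = 1) (hβ : ⟪β, β⟫ ≠ 0) :
    rootReflection β (α - β) = α := by
  have : 2 * ⟪α - β, β⟫ / ⟪β, β⟫ = -1 := by
    rw [inner_sub_left, mul_sub, sub_div, h, mul_div_assoc, div_self hβ]
    norm_num
  rw [rootReflection, this, neg_one_smul, sub_neg_eq_add, sub_add_cancel]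

theorem map_rootReflection_of_map_eq_zero {h : V →ₗ[ℝ] ℝ} (hα : h α = 0) (x : V) :
    h (rootReflection α x) = h x := by
  simp [rootReflection, hα]

namespace IsIrrCrystRootSystem

variable (hΦ : IsIrrCrystRootSystem Φ)
include hΦ

theorem inner_self_pos (hα : α ∈ Φ) : 0 < ⟪α, α⟫ :=
  real_inner_self_pos.mpr fun h => hΦ.nonzero (h ▸ hα)

theorem rootReflection_mem (hα : α ∈ Φ) (hβ : β ∈ Φ) : rootReflection α β ∈ Φ :=
  hΦ.reflect_mem α hα β hβ

theorem neg_mem (hα : α ∈ Φ) : -α ∈ Φ := by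
  have h := hΦ.rootReflection_mem hα hα
  rwa [rootReflection, mul_div_assoc, div_self (hΦ.inner_self_pos hα).ne', mul_one, two_smul,
    sub_add_cancel_left] at h

theorem inner_lt_norm_mul_norm (hα : α ∈ Φ) (hβ : β ∈ Φ) (hne : α ≠ β) :
    ⟪α, β⟫ < ‖α‖ * ‖β‖ := by
  rw [inner_lt_norm_mul_iff_real]
  intro heq
  have hα0 : ‖α‖ ≠ 0 := norm_ne_zero_iff.mpr fun h => hΦ.nonzero (h ▸ hα)
  have hβ0 : ‖β‖ ≠ 0 := norm_ne_zero_iff.mpr fun h => hΦ.nonzero (h ▸ hβ)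
  have hβα : β = (‖β‖ / ‖α‖) • α := by
    rw [div_eq_inv_mul, mul_smul, heq, inv_smul_smul₀ hα0]
  rcases hΦ.reduced α hα _ (hβα ▸ hβ) with h | h
  · exact hne (by rw [hβα, h, one_smul])
  · have : 0 < ‖β‖ / ‖α‖ := by positivity
    linarith

theorem cartan_eq_one_of_inner_pos (hα : α ∈ Φ) (hβ : β ∈ Φ) (hne : α ≠ β)
    (hpos : 0 < ⟪α, β⟫) :
    2 * ⟪α, β⟫ / ⟪β, β⟫ = 1 ∨ 2 * ⟪α, β⟫ / ⟪α, α⟫ = 1 := by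
  obtain ⟨p, hp⟩ := hΦ.crystallographic β hβ α hα
  obtain ⟨q, hq⟩ := hΦ.crystallographic α hα β hβ
  rw [real_inner_comm] at hq
  have hα' := hΦ.inner_self_pos hα
  have hβ' := hΦ.inner_self_pos hβ
  have hp1 : 1 ≤ p := by
    have : (0 : ℝ) < p := by rw [hp]; positivity
    exact_mod_cast this
  have hq1 : 1 ≤ q := by
    have : (0 : ℝ) < q := by rw [hq]; positivity
    exact_mod_cast this
  -- strict Cauchy–Schwarz gives `p * q < 4`
  have hpq : p * q < 4 := by
    have hcs := hΦ.inner_lt_norm_mul_norm hα hβ hne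
    have : ((p * q : ℤ) : ℝ) < 4 := by
      push_cast
      rw [hp, hq, div_mul_div_comm, div_lt_iff₀ (by positivity), real_inner_self_eq_norm_sq,
        real_inner_self_eq_norm_sq]
      nlinarith
    exact_mod_cast this
  have : p = 1 ∨ q = 1 := by
    by_contra! h
    nlinarith [lt_of_le_of_ne hp1 (Ne.symm h.1), lt_of_le_of_ne hq1 (Ne.symm h.2)]
  rcases this with h | h
  · exact Or.inl (by rw [← hp, h, Int.cast_one])
  · exact Or.inr (by rw [← hq, h, Int.cast_one])

theorem sub_mem_of_inner_pos (hα : α ∈ Φ) (hβ : β ∈ Φ) (hne : α ≠ β) (hpos : 0 < ⟪α, β⟫) :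
    α - β ∈ Φ := by
  rcases hΦ.cartan_eq_one_of_inner_pos hα hβ hne hpos with h | h
  · have := hΦ.rootReflection_mem hβ hα
    rwa [rootReflection, h, one_smul] at this
  · have := hΦ.neg_mem (hΦ.rootReflection_mem hα hβ)
    rwa [rootReflection, real_inner_comm, h, one_smul, neg_sub] at this

theorem cartan_eq_one_of_inner_self_le (hα : α ∈ Φ) (hβ : β ∈ Φ) (hne : α ≠ β)
    (hle : ⟪α, α⟫ ≤ ⟪α, β⟫) : 2 * ⟪α, β⟫ / ⟪β, β⟫ = 1 := by
  have hα' := hΦ.inner_self_pos hα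
  refine (hΦ.cartan_eq_one_of_inner_pos hα hβ hne (hα'.trans_le hle)).resolve_right fun h => ?_
  rw [div_eq_one_iff_eq hα'.ne'] at h
  linarith

theorem exists_add_of_sub_eq_add {h : V →ₗ[ℝ] ℝ} {s γ : V} (hα : α ∈ Φ) (hs : s ∈ Φ)
    (hβ : β ∈ Φ) (hγ : γ ∈ Φ) (hs0 : h s = 0) (hβ0 : 0 < h β) (hγ0 : 0 < h γ)
    (hβγ : α - s = β + γ) :
    ∃ β' ∈ Φ, ∃ γ' ∈ Φ, 0 < h β' ∧ 0 < h γ' ∧ α = β' + γ' := by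
  have hlevel : h α = h β + h γ := by
    rw [← map_add, ← hβγ, map_sub, hs0, sub_zero]
  by_cases hαβ : 0 < ⟪α, β⟫
  · exact ⟨β, hβ, α - β, hΦ.sub_mem_of_inner_pos hα hβ (ne_of_apply_ne h (by linarith)) hαβ,
      hβ0, by rw [map_sub]; linarith, by abel⟩
  by_cases hαγ : 0 < ⟪α, γ⟫
  · exact ⟨α - γ, hΦ.sub_mem_of_inner_pos hα hγ (ne_of_apply_ne h (by linarith)) hαγ, γ, hγ,
      by rw [map_sub]; linarith, hγ0, by abel⟩
  -- now `⟪α, α⟫ ≤ ⟪α, s⟫`, so the reflection in `s` maps `α - s = β + γ` back to `α`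
  have hle : ⟪α, α⟫ ≤ ⟪α, s⟫ := by
    have : ⟪α, α⟫ = ⟪α, s⟫ + ⟪α, β⟫ + ⟪α, γ⟫ := by
      rw [← inner_add_right, ← inner_add_right, add_assoc, ← hβγ, add_sub_cancel]
    linarith
  have hcartan := hΦ.cartan_eq_one_of_inner_self_le hα hs (ne_of_apply_ne h (by linarith)) hle
  refine ⟨rootReflection s β, hΦ.rootReflection_mem hs hβ,
    rootReflection s γ, hΦ.rootReflection_mem hs hγ,
    by rwa [map_rootReflection_of_map_eq_zero hs0], by rwa [map_rootReflection_of_map_eq_zero hs0],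
    ?_⟩
  rw [← rootReflection_add, ← hβγ,
    rootReflection_sub_self_of_cartan_eq_one hcartan (hΦ.inner_self_pos hs).ne']

end IsIrrCrystRootSystem

end RootSystem

section PositiveSystem

variable {V : Type*} [NormedAddCommGroup V] [InnerProductSpace ℝ V] {Φ Pos : Set V} {α : V}

theorem linearIndepOn_of_pairwise_inner_nonpos {s : Set V} (f : V →ₗ[ℝ] ℝ)
    (hf : ∀ v ∈ s, 0 < f v) (hs : s.Pairwise fun v w => ⟪v, w⟫ ≤ 0) : LinearIndepOn ℝ id s := by
  rw [linearIndepOn_iff']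
  intro t g hts hsum
  have hzero : ∀ c : V → ℝ, (∀ v, 0 ≤ c v) → ∑ v ∈ t, c v • v = 0 → ∀ v ∈ t, c v = 0 := by
    intro c hc hc0 v hv
    have : ∑ w ∈ t, c w * f w = 0 := by simpa [map_sum] using congrArg f hc0
    have := (Finset.sum_eq_zero_iff_of_nonneg fun w hw => mul_nonneg (hc w) (hf w (hts hw)).le).mp
      this v hv
    exact (mul_eq_zero.mp this).resolve_right (hf v (hts hv)).ne'
  -- for `g = p - q` split into positive and negative parts, `u = ∑ p v • v = ∑ q v • v` has
  -- `⟪u, u⟫ = ∑ p v * q w * ⟪v, w⟫ ≤ 0`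
  set p : V → ℝ := fun v => max (g v) 0
  set q : V → ℝ := fun v => max (-g v) 0
  have hpq : ∀ v, p v * q v = 0 := fun v => by
    rcases le_total (g v) 0 with h | h <;> simp [p, q, h]
  set u := ∑ v ∈ t, p v • v
  have hu : u = ∑ v ∈ t, q v • v := by
    rw [← sub_eq_zero, ← Finset.sum_sub_distrib, ← hsum]
    exact Finset.sum_congr rfl fun v _ => by
      rw [← sub_smul, max_zero_sub_max_neg_zero_eq_self, id]
  have hu0 : u = 0 := by
    refine real_inner_self_nonpos.mp ?_
    conv_lhs => enter [2]; rw [hu]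
    simp only [u, sum_inner, inner_sum, real_inner_smul_left, real_inner_smul_right]
    refine Finset.sum_nonpos fun v hv => Finset.sum_nonpos fun w hw => ?_
    by_cases hvw : v = w
    · subst hvw
      rw [← mul_assoc, hpq, zero_mul]
    · rw [← mul_assoc]
      exact mul_nonpos_of_nonneg_of_nonpos (mul_nonneg (le_max_right _ _) (le_max_right _ _))
        (hs (hts hw) (hts hv) (Ne.symm hvw))
  intro v hv
  have hp := hzero p (fun v => le_max_right _ _) hu0 v hv
  have hq := hzero q (fun v => le_max_right _ _) (hu ▸ hu0) v hv
  rw [← max_zero_sub_max_neg_zero_eq_self (g v)]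
  simp only [p, q] at hp hq
  rw [hp, hq, sub_zero]

namespace IsPositiveSystem

variable (hPos : IsPositiveSystem Φ Pos)
include hPos

theorem subset : Pos ⊆ Φ := by
  obtain ⟨f, -, rfl⟩ := hPos
  exact Set.sep_subset _ _

theorem mem_or_neg_mem (hΦ : IsIrrCrystRootSystem Φ) (hα : α ∈ Φ) : α ∈ Pos ∨ -α ∈ Pos := by
  obtain ⟨f, hf, rfl⟩ := hPos
  rcases (hf α hα).lt_or_gt with h | h
  · exact Or.inr ⟨hΦ.neg_mem hα, by rw [map_neg]; linarith⟩
  · exact Or.inl ⟨hα, h⟩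

theorem mem_closure_simples (hΦ : Φ.Finite) (hα : α ∈ Pos) :
    α ∈ AddSubmonoid.closure (simples Pos) := by
  obtain ⟨f, -, rfl⟩ := hPos
  refine (hΦ.subset (Set.sep_subset _ _)).induction_on_lt f (fun α hα IH => ?_) α hα
  by_cases hs : α ∈ simples {α ∈ Φ | 0 < f α}
  · exact AddSubmonoid.subset_closure hs
  · obtain ⟨β, hβ, γ, hγ, rfl⟩ := not_and_not_right.mp hs hα
    have hfβ := hβ.2
    have hfγ := hγ.2
    refine add_mem (IH β hβ ?_) (IH γ hγ ?_) <;> simp only [map_add] <;> linarith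

theorem inner_nonpos_of_mem_simples (hΦ : IsIrrCrystRootSystem Φ) {s t : V}
    (hs : s ∈ simples Pos) (ht : t ∈ simples Pos) (hne : s ≠ t) : ⟪s, t⟫ ≤ 0 := by
  by_contra! hpos
  have hst := hΦ.sub_mem_of_inner_pos (hPos.subset hs.1) (hPos.subset ht.1) hne hpos
  rcases hPos.mem_or_neg_mem hΦ hst with h | h
  · exact hs.2 ⟨t, ht.1, s - t, h, by abel⟩
  · exact ht.2 ⟨s, hs.1, -(s - t), h, by abel⟩

theorem linearIndepOn_simples (hΦ : IsIrrCrystRootSystem Φ) : LinearIndepOn ℝ id (simples Pos) := by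
  obtain ⟨f, -, hPosEq⟩ := id hPos
  refine linearIndepOn_of_pairwise_inner_nonpos f (fun v hv => ?_)
    fun s hs t ht => hPos.inner_nonpos_of_mem_simples hΦ hs ht
  exact (hPosEq ▸ hv.1 : v ∈ {α ∈ Φ | 0 < f α}).2

theorem exists_mem_simples_inner_pos (hΦ : IsIrrCrystRootSystem Φ) (hα : α ∈ Pos) :
    ∃ s ∈ simples Pos, 0 < ⟪α, s⟫ := by
  by_contra! h
  have : ∀ x ∈ AddSubmonoid.closure (simples Pos), ⟪α, x⟫ ≤ 0 := fun x hx => by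
    induction hx using AddSubmonoid.closure_induction with
    | mem x hx => exact h x hx
    | zero => rw [inner_zero_right]
    | add x y _ _ hx hy => rw [inner_add_right]; linarith
  exact (this α (hPos.mem_closure_simples hΦ.finite hα)).not_gt
    (hΦ.inner_self_pos (hPos.subset hα))

end IsPositiveSystem

theorem posLM_empty_eq (hΦ : IsIrrCrystRootSystem Φ) (L : Set V) :
    posLM Φ Pos L ∅ = Pos \ subsys Φ L := by
  have : subsys Φ (∅ : Set V) = ∅ := by
    ext x
    simp only [subsys, Submodule.span_empty, Set.mem_inter_iff, SetLike.mem_coe,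
      Submodule.mem_bot, Set.mem_empty_iff_false, iff_false, not_and]
    rintro hx rfl
    exact hΦ.nonzero hx
  rw [posLM, this, Set.union_empty]

theorem posLM_empty_subset (hΦ : IsIrrCrystRootSystem Φ) (L : Set V) :
    posLM Φ Pos L ∅ ⊆ Pos :=
  (posLM_empty_eq hΦ L).trans_subset Set.sdiff_subset

end PositiveSystem

section Level

variable {V : Type*} [NormedAddCommGroup V] [InnerProductSpace ℝ V] {Φ Pos L : Set V}
  {h : V →ₗ[ℝ] ℝ} {α : V}

/-- `h` is the `L`-level: the sum of the coefficients at the simple roots outside `L`. -/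
structure IsLevelFunctional (Pos L : Set V) (h : V →ₗ[ℝ] ℝ) : Prop where
  eq_zero : ∀ v ∈ L, h v = 0
  eq_one : ∀ v ∈ simples Pos, v ∉ L → h v = 1

theorem exists_isLevelFunctional (hΦ : IsIrrCrystRootSystem Φ) (hPos : IsPositiveSystem Φ Pos)
    (hL : L ⊆ simples Pos) : ∃ h, IsLevelFunctional Pos L h := by
  classical
  have hli := hPos.linearIndepOn_simples hΦ
  let B := Module.Basis.extend hli
  have hB : ∀ v (hv : v ∈ simples Pos), B ⟨v, hli.subset_extend _ hv⟩ = v := fun v hv => by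
    simp [B, Module.Basis.coe_extend]
  refine ⟨B.constr ℝ fun j => if (j : V) ∈ L then 0 else 1, fun v hv => ?_, fun v hv hvL => ?_⟩
  · rw [← hB v (hL hv), Module.Basis.constr_basis, if_pos hv]
  · rw [← hB v hv, Module.Basis.constr_basis, if_neg hvL]

namespace IsLevelFunctional

theorem eq_zero_of_mem_span (hh : IsLevelFunctional Pos L h) {v : V}
    (hv : v ∈ Submodule.span ℝ L) : h v = 0 :=
  Submodule.span_le.mpr (fun w hw => LinearMap.mem_ker.mpr (hh.eq_zero w hw)) hv

theorem exists_natCast_of_mem_closure (hh : IsLevelFunctional Pos L h) {x : V}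
    (hx : x ∈ AddSubmonoid.closure (simples Pos)) :
    ∃ k : ℕ, h x = k ∧ (k = 0 → x ∈ Submodule.span ℝ L) := by
  induction hx using AddSubmonoid.closure_induction with
  | mem s hs =>
    by_cases hsL : s ∈ L
    · exact ⟨0, by rw [hh.eq_zero s hsL, Nat.cast_zero], fun _ => Submodule.subset_span hsL⟩
    · exact ⟨1, by rw [hh.eq_one s hs hsL, Nat.cast_one], fun h => absurd h one_ne_zero⟩
  | zero => exact ⟨0, by rw [map_zero, Nat.cast_zero], fun _ => zero_mem _⟩
  | add x y _ _ hx hy =>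
    obtain ⟨k, hk, hk0⟩ := hx
    obtain ⟨l, hl, hl0⟩ := hy
    exact ⟨k + l, by rw [map_add, hk, hl, Nat.cast_add],
      fun h0 => add_mem (hk0 (by omega)) (hl0 (by omega))⟩

variable (hh : IsLevelFunctional Pos L h) (hΦ : IsIrrCrystRootSystem Φ)
  (hPos : IsPositiveSystem Φ Pos)
include hh hΦ hPos

theorem exists_natCast (hα : α ∈ Pos) : ∃ k : ℕ, h α = k :=
  (hh.exists_natCast_of_mem_closure (hPos.mem_closure_simples hΦ.finite hα)).imp fun _ => And.left

theorem mem_pos_of_pos (hα : α ∈ Φ) (h0 : 0 < h α) : α ∈ Pos := by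
  refine (hPos.mem_or_neg_mem hΦ hα).resolve_right fun hneg => ?_
  obtain ⟨k, hk⟩ := hh.exists_natCast hΦ hPos hneg
  rw [map_neg] at hk
  linarith [k.cast_nonneg (α := ℝ)]

theorem mem_posLM_iff : α ∈ posLM Φ Pos L ∅ ↔ α ∈ Φ ∧ 0 < h α := by
  rw [posLM_empty_eq hΦ]
  constructor
  · rintro ⟨hαPos, hαL⟩
    obtain ⟨k, hk, hk0⟩ :=
      hh.exists_natCast_of_mem_closure (hPos.mem_closure_simples hΦ.finite hαPos)
    refine ⟨hPos.subset hαPos, hk ▸ Nat.cast_pos.mpr (Nat.pos_of_ne_zero fun h0 => ?_)⟩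
    exact hαL ⟨hPos.subset hαPos, hk0 h0⟩
  · rintro ⟨hα, h0⟩
    exact ⟨hh.mem_pos_of_pos hΦ hPos hα h0, fun hαL => h0.ne' (hh.eq_zero_of_mem_span hαL.2)⟩

theorem one_le (hα : α ∈ posLM Φ Pos L ∅) : 1 ≤ h α := by
  obtain ⟨k, hk⟩ := hh.exists_natCast hΦ hPos (posLM_empty_subset hΦ L hα)
  have h0 := ((hh.mem_posLM_iff hΦ hPos).mp hα).2
  rw [hk] at h0 ⊢
  exact_mod_cast Nat.one_le_iff_ne_zero.mpr (by rintro rfl; simp at h0)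

theorem exists_add_of_two_le :
    ∀ α ∈ Φ, 2 ≤ h α → ∃ β ∈ Φ, ∃ γ ∈ Φ, 0 < h β ∧ 0 < h γ ∧ α = β + γ := by
  obtain ⟨f, -, hPosEq⟩ := id hPos
  refine hΦ.finite.induction_on_lt f fun α hα IH h2 => ?_
  obtain ⟨s, hs, hαs⟩ :=
    hPos.exists_mem_simples_inner_pos hΦ (hh.mem_pos_of_pos hΦ hPos hα (by linarith))
  have hsΦ := hPos.subset hs.1
  by_cases hsL : s ∈ L
  · have hs0 := hh.eq_zero s hsL
    have hfs : 0 < f s := (hPosEq ▸ hs.1 : s ∈ {α ∈ Φ | 0 < f α}).2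
    have hαs' := hΦ.sub_mem_of_inner_pos hα hsΦ (ne_of_apply_ne h (by linarith)) hαs
    obtain ⟨β, hβ, γ, hγ, hβ0, hγ0, hβγ⟩ := IH (α - s) hαs' (by rw [map_sub]; linarith)
      (by rw [map_sub, hs0, sub_zero]; exact h2)
    exact hΦ.exists_add_of_sub_eq_add hα hsΦ hβ hγ hs0 hβ0 hγ0 hβγ
  · have hs1 := hh.eq_one s hs hsL
    exact ⟨s, hsΦ, α - s, hΦ.sub_mem_of_inner_pos hα hsΦ (ne_of_apply_ne h (by linarith)) hαs,
      by linarith, by rw [map_sub]; linarith, by abel⟩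

theorem posLM_induction {P : V → Prop} (base : ∀ α ∈ posLM Φ Pos L ∅, h α = 1 → P α)
    (step : ∀ β ∈ posLM Φ Pos L ∅, ∀ γ ∈ posLM Φ Pos L ∅, β + γ ∈ posLM Φ Pos L ∅ →
      P β → P γ → P (β + γ)) :
    ∀ α ∈ posLM Φ Pos L ∅, P α := by
  have hmem : ∀ {α}, α ∈ posLM Φ Pos L ∅ ↔ α ∈ Φ ∧ 0 < h α := hh.mem_posLM_iff hΦ hPos
  refine (hΦ.finite.subset fun α hα => (hmem.mp hα).1).induction_on_lt h fun α hα IH => ?_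
  rcases lt_or_ge (h α) 2 with hlt | h2
  · obtain ⟨k, hk⟩ := hh.exists_natCast hΦ hPos (posLM_empty_subset hΦ L hα)
    have h1 := hh.one_le hΦ hPos hα
    rw [hk] at hlt h1
    have : k = 1 := by
      have : k < 2 := by exact_mod_cast hlt
      have : 1 ≤ k := by exact_mod_cast h1
      omega
    exact base α hα (by rw [hk, this, Nat.cast_one])
  · obtain ⟨β, hβ, γ, hγ, hβ0, hγ0, rfl⟩ := hh.exists_add_of_two_le hΦ hPos α (hmem.mp hα).1 h2
    have hβ' := hmem.mpr ⟨hβ, hβ0⟩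
    have hγ' := hmem.mpr ⟨hγ, hγ0⟩
    have := hh.one_le hΦ hPos hβ'
    have := hh.one_le hΦ hPos hγ'
    exact step β hβ' γ hγ' hα (IH β hβ' (by rw [map_add]; linarith))
      (IH γ hγ' (by rw [map_add]; linarith))

theorem exists_list_sum_eq : ∀ α ∈ posLM Φ Pos L ∅,
    ∃ l : List V, (l.length : ℝ) = h α ∧ (∀ β ∈ l, β ∈ posLM Φ Pos L ∅) ∧ l.sum = α := by
  refine hh.posLM_induction hΦ hPos (fun α hα h1 => ⟨[α], by simp [h1], by simpa using hα, by simp⟩)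
    ?_
  rintro β - γ - - ⟨l₁, hl₁, hβ, rfl⟩ ⟨l₂, hl₂, hγ, rfl⟩
  refine ⟨l₁ ++ l₂, by rw [List.length_append, Nat.cast_add, hl₁, hl₂, map_add], ?_,
    List.sum_append⟩
  intro δ hδ
  rcases List.mem_append.mp hδ with hδ | hδ
  exacts [hβ δ hδ, hγ δ hδ]

theorem dL_eq (hα : α ∈ posLM Φ Pos L ∅) : (dL Φ Pos L α : ℝ) = h α := by
  obtain ⟨k, hk⟩ := hh.exists_natCast hΦ hPos (posLM_empty_subset hΦ L hα)
  suffices dL Φ Pos L α = k by rw [this, hk]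
  rw [dL, if_pos hα]
  refine IsGreatest.csSup_eq ⟨?_, ?_⟩
  · obtain ⟨l, hl, hlmem, hsum⟩ := hh.exists_list_sum_eq hΦ hPos α hα
    exact ⟨l, by exact_mod_cast hl.trans hk, hlmem, hsum⟩
  · rintro m ⟨l, rfl, hl, rfl⟩
    have := List.card_nsmul_le_sum (l.map h) 1 (by
      simpa using fun β hβ => hh.one_le hΦ hPos (hl β hβ))
    rw [List.length_map, ← map_list_sum, hk, nsmul_one] at this
    exact_mod_cast this

end IsLevelFunctional

end Level

section Hat

variable {V : Type*} {Φ Pos : Set V} {x : V × ℝ}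

theorem fst_mem_of_mem_hat (hx : x ∈ hat Pos Φ) : x.1 ∈ Φ := by
  obtain ⟨α, hα, m, h1, -⟩ := hx
  exact h1 ▸ hα

theorem snd_nonneg_of_mem_hat (hx : x ∈ hat Pos Φ) : 0 ≤ x.2 := by
  obtain ⟨α, -, m, -, ⟨-, h2⟩ | ⟨-, h2⟩⟩ := hx <;> rw [h2] <;> positivity

theorem exists_natCast_snd_of_mem_hat (hx : x ∈ hat Pos Φ) (hpos : x.1 ∈ Pos) :
    ∃ m : ℕ, x.2 = m := by
  obtain ⟨α, -, m, h1, ⟨-, h2⟩ | ⟨hneg, -⟩⟩ := hx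
  · exact ⟨m, h2⟩
  · exact absurd (h1 ▸ hpos) hneg

theorem isBiclosedIn_hat_setOf [AddCommGroup V] [Module ℝ V] (hΦ : (0 : V) ∉ Φ)
    (h : V →ₗ[ℝ] ℝ) {c : ℝ} (hc : 0 ≤ c) :
    IsBiclosedIn (hat Pos Φ) {x ∈ hat Pos Φ | 0 < h x.1 ∧ x.2 ≤ c * h x.1} := by
  let ψ := h ∘ₗ LinearMap.fst ℝ V ℝ
  have hset : {x ∈ hat Pos Φ | 0 < h x.1 ∧ x.2 ≤ c * h x.1}
      = {x ∈ hat Pos Φ | 0 < ψ x ∧ 0 ≤ (c • ψ - LinearMap.snd ℝ V ℝ) x} := by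
    ext x
    simp [ψ, sub_nonneg]
  rw [hset]
  refine ⟨isClosedIn_setOf_pos_and_nonneg (fun h0 => hΦ (fst_mem_of_mem_hat h0)) _ _,
    isClosedIn_diff_setOf_pos_and_nonneg fun x hx hψ => ?_⟩
  simp only [LinearMap.sub_apply, LinearMap.smul_apply, smul_eq_mul, LinearMap.snd_apply]
  nlinarith [snd_nonneg_of_mem_hat hx]

end Hat

section Truncation

variable {V : Type*} [NormedAddCommGroup V] [InnerProductSpace ℝ V] {Φ Pos L : Set V}
  {h : V →ₗ[ℝ] ℝ}

/-- The set `(Φ⁺_{L,∅})_n = {α + kδ | α ∈ Φ⁺_{L,∅}, 0 ≤ k ≤ n}`. -/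
abbrev truncation (Φ Pos L : Set V) (n : ℕ) : Set (V × ℝ) :=
  {x | ∃ α ∈ posLM Φ Pos L ∅, ∃ k : ℕ, k ≤ n ∧ x = (α, (k : ℝ))}

theorem mem_hat_of_mem_pos (hPos : IsPositiveSystem Φ Pos) {α : V} (hα : α ∈ Pos) (m : ℕ) :
    (α, (m : ℝ)) ∈ hat Pos Φ :=
  ⟨α, hPos.subset hα, m, rfl, Or.inl ⟨hα, rfl⟩⟩

namespace IsLevelFunctional

variable (hh : IsLevelFunctional Pos L h) (hΦ : IsIrrCrystRootSystem Φ)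
  (hPos : IsPositiveSystem Φ Pos)
include hh hΦ hPos

theorem mem_of_isClosedIn {n : ℕ} {Γ : Set (V × ℝ)} (hΓ : IsClosedIn (hat Pos Φ) Γ)
    (hXΓ : truncation Φ Pos L n ⊆ Γ) :
    ∀ α ∈ posLM Φ Pos L ∅, ∀ m : ℕ, (m : ℝ) ≤ n * h α → (α, (m : ℝ)) ∈ Γ := by
  refine hh.posLM_induction hΦ hPos (fun α hα h1 m hm => hXΓ ⟨α, hα, m, ?_, rfl⟩) ?_
  · rw [h1, mul_one] at hm
    exact_mod_cast hm
  rintro β hβ γ hγ hβγ IHβ IHγ m hm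
  obtain ⟨kβ, hkβ⟩ := hh.exists_natCast hΦ hPos (posLM_empty_subset hΦ L hβ)
  obtain ⟨kγ, hkγ⟩ := hh.exists_natCast hΦ hPos (posLM_empty_subset hΦ L hγ)
  rw [map_add, hkβ, hkγ] at hm
  obtain ⟨m₁, m₂, rfl, hm₁, hm₂⟩ : ∃ m₁ m₂, m = m₁ + m₂ ∧ m₁ ≤ n * kβ ∧ m₂ ≤ n * kγ := by
    have : m ≤ n * kβ + n * kγ := by exact_mod_cast (mul_add (n : ℝ) kβ kγ) ▸ hm
    exact ⟨min m (n * kβ), m - min m (n * kβ), by omega, min_le_right _ _, by omega⟩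
  have hsum : ((β + γ, ((m₁ + m₂ : ℕ) : ℝ)) : V × ℝ)
      = (1 : ℝ) • (β, (m₁ : ℝ)) + (1 : ℝ) • (γ, (m₂ : ℝ)) := by
    rw [one_smul, one_smul, Prod.mk_add_mk, Nat.cast_add]
  rw [hsum]
  refine hΓ.2 _ (IHβ m₁ ?_) _ (IHγ m₂ ?_) 1 1 zero_le_one zero_le_one
    (hsum ▸ mem_hat_of_mem_pos hPos (posLM_empty_subset hΦ L hβγ) _)
  · rw [hkβ]; exact_mod_cast hm₁
  · rw [hkγ]; exact_mod_cast hm₂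

theorem closureIn_truncation_eq (n : ℕ) :
    closureIn (hat Pos Φ) (truncation Φ Pos L n) =
      {x ∈ hat Pos Φ | 0 < h x.1 ∧ x.2 ≤ n * h x.1} := by
  refine closureIn_eq_of_isLeast ⟨⟨?_, (isBiclosedIn_hat_setOf hΦ.nonzero h n.cast_nonneg).1⟩,
    fun Γ ⟨hXΓ, hΓ⟩ x ⟨hx, h0, hle⟩ => ?_⟩
  · rintro _ ⟨α, hα, k, hk, rfl⟩
    have := hh.one_le hΦ hPos hα
    refine ⟨mem_hat_of_mem_pos hPos (posLM_empty_subset hΦ L hα) k, by linarith, ?_⟩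
    have : (k : ℝ) ≤ n := by exact_mod_cast hk
    nlinarith
  · have hα := (hh.mem_posLM_iff hΦ hPos).mpr ⟨fst_mem_of_mem_hat hx, h0⟩
    obtain ⟨m, hm⟩ := exists_natCast_snd_of_mem_hat hx (posLM_empty_subset hΦ L hα)
    rw [← Prod.mk.eta (p := x), hm] at hle ⊢
    exact hh.mem_of_isClosedIn hΦ hPos hΓ hXΓ _ hα m hle

theorem setOf_le_mul_eq (n : ℕ) :
    {x ∈ hat Pos Φ | 0 < h x.1 ∧ x.2 ≤ n * h x.1} =
      {x | ∃ α ∈ posLM Φ Pos L ∅, ∃ k : ℕ, k ≤ n * dL Φ Pos L α ∧ x = (α, (k : ℝ))} := by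
  ext x
  constructor
  · rintro ⟨hx, h0, hle⟩
    have hα := (hh.mem_posLM_iff hΦ hPos).mpr ⟨fst_mem_of_mem_hat hx, h0⟩
    obtain ⟨m, hm⟩ := exists_natCast_snd_of_mem_hat hx (posLM_empty_subset hΦ L hα)
    refine ⟨x.1, hα, m, ?_, Prod.ext rfl hm⟩
    rw [hm, ← hh.dL_eq hΦ hPos hα] at hle
    exact_mod_cast hle
  · rintro ⟨α, hα, k, hk, rfl⟩
    refine ⟨mem_hat_of_mem_pos hPos (posLM_empty_subset hΦ L hα) k,
      ((hh.mem_posLM_iff hΦ hPos).mp hα).2, ?_⟩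
    show (k : ℝ) ≤ n * h α
    rw [← hh.dL_eq hΦ hPos hα]
    exact_mod_cast hk

end IsLevelFunctional

end Truncation

end AffineBiclosed

open AffineBiclosed in
/-- Let `(Φ⁺_{L,∅})_n = {α + kδ | α ∈ Φ⁺_{L,∅}, 0 ≤ k ≤ n}` in the affine positive system
`Φ̃⁺`. Then its closure in `Φ̃⁺` equals `{α + kδ | α ∈ Φ⁺_{L,∅}, 0 ≤ k ≤ n·d_L(α)}`;
in particular, this closure is finite, and moreover it is biclosed in `Φ̃⁺`. -/
theorem closure_of_truncated_set
    {V : Type*} [NormedAddCommGroup V] [InnerProductSpace ℝ V]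
    {Φ Pos : Set V} (hΦ : IsIrrCrystRootSystem Φ) (hPos : IsPositiveSystem Φ Pos)
    {L : Set V} (hL : L ⊂ simples Pos) (n : ℕ) :
    closureIn (hat Pos Φ)
        {x : V × ℝ | ∃ α ∈ posLM Φ Pos L ∅, ∃ k : ℕ, k ≤ n ∧ x = (α, (k : ℝ))}
      = {x : V × ℝ | ∃ α ∈ posLM Φ Pos L ∅, ∃ k : ℕ, k ≤ n * dL Φ Pos L α ∧
          x = (α, (k : ℝ))} ∧
    (closureIn (hat Pos Φ)
        {x : V × ℝ | ∃ α ∈ posLM Φ Pos L ∅, ∃ k : ℕ, k ≤ n ∧ x = (α, (k : ℝ))}).Finite ∧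
    IsBiclosedIn (hat Pos Φ)
      (closureIn (hat Pos Φ)
        {x : V × ℝ | ∃ α ∈ posLM Φ Pos L ∅, ∃ k : ℕ, k ≤ n ∧ x = (α, (k : ℝ))}) := by
  obtain ⟨h, hh⟩ := exists_isLevelFunctional hΦ hPos hL.subset
  rw [hh.closureIn_truncation_eq hΦ hPos n]
  refine ⟨hh.setOf_le_mul_eq hΦ hPos n, ?_, isBiclosedIn_hat_setOf hΦ.nonzero h n.cast_nonneg⟩
  rw [hh.setOf_le_mul_eq hΦ hPos n]
  refine (hΦ.finite.biUnion fun α _ =>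
    (Set.finite_Iic (n * dL Φ Pos L α)).image fun k : ℕ => (α, (k : ℝ))).subset ?_
  rintro _ ⟨α, hα, k, hk, rfl⟩
  exact Set.mem_biUnion (hPos.subset (posLM_empty_subset hΦ L hα)) ⟨k, hk, rfl⟩
end
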